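/- Let n ≥ 1, s ∈ (0,1), let G be a Young function satisfying condition (cond) with exponents 1 < p⁻ ≤ p⁺ < ∞ and s·p⁺ < n, let G* be the critical Young function and set H = G* ∘ G^{-1}. Let Ω ⊂ ℝⁿ be open. Then for every measurable u on Ω with ‖u‖_{L^{G*}(Ω)} < ∞ one has ‖G(|u|)‖_{L^H(Ω)} ≤ max{ ‖u‖_{L^{G*}(Ω)}^{p⁺}, ‖u‖_{L^{G*}(Ω)}^{p⁻} }. -/

import Mathlib

/-!
Condition (cond) bounds the logarithmic derivative `g/G` of `G` between `p⁻/t` and `p⁺/t`, so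
`G(t) t^{-p⁺}` decreases and `G(t) t^{-p⁻}` increases on `(0, ∞)`; hence
`G(l t) ≤ max(l^{p⁺}, l^{p⁻}) G(t)` for all `l > 0`. If `λ` is admissible for `‖u‖_{L^{G*}}`,
put `M = max(λ^{p⁺}, λ^{p⁻})`: then `G(|u|)/M ≤ G(|u|/λ)`, and applying the monotone maps `G⁻¹`
and `G*` gives `H(G(|u|)/M) ≤ G*(|u|/λ)`, so `M` is admissible for `‖G(|u|)‖_{L^H}`. Since
`λ ↦ max(λ^{p⁺}, λ^{p⁻})` is monotone and continuous, the bound passes to the infimum over `λ`.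
-/

open MeasureTheory Real Set Filter
open scoped ENNReal

noncomputable section

/-- A Young function `G` together with its right-continuous density `g`:
`G t = ∫₀ᵗ g(τ) dτ` for `t ≥ 0`, where `g` is right-continuous, nondecreasing on `[0,∞)`,
`g 0 = 0`, `g t > 0` for `t > 0` and `g t → ∞` as `t → ∞`.  `G` is extended evenly
(`G (-t) = G t`) and `g` oddly (`g (-t) = -g t`). -/
structure YoungPair where
  g : ℝ → ℝ
  G : ℝ → ℝ
  g_odd : ∀ t, g (-t) = -g t
  g_zero : g 0 = 0
  g_pos : ∀ t : ℝ, 0 < t → 0 < g t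
  g_mono : MonotoneOn g (Set.Ici 0)
  g_rightCont : ∀ t ∈ Set.Ici (0 : ℝ), ContinuousWithinAt g (Set.Ici t) t
  g_atTop : Filter.Tendsto g Filter.atTop Filter.atTop
  G_even : ∀ t, G (-t) = G t
  G_eq : ∀ t : ℝ, 0 ≤ t → G t = ∫ τ in (0 : ℝ)..t, g τ

/-- Condition (cond): `p⁻ ≤ t·g(t)/G(t) ≤ p⁺` for all `t > 0`. -/
def YoungPair.Cond (Y : YoungPair) (pm pp : ℝ) : Prop :=
  ∀ t : ℝ, 0 < t → pm * Y.G t ≤ t * Y.g t ∧ t * Y.g t ≤ pp * Y.G t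

/-- Euclidean space `ℝⁿ`. -/
abbrev Euc (n : ℕ) := EuclideanSpace ℝ (Fin n)

/-- The `s`-Hölder quotient `D_s u(x,y) = (u x - u y)/|x-y|^s`. -/
def Ds (n : ℕ) (s : ℝ) (u : Euc n → ℝ) (x y : Euc n) : ℝ :=
  (u x - u y) / ‖x - y‖ ^ s

/-- The modular `Φ_G(u) = ∫_Ω G(|u|) dx` (as an extended real). -/
def modG (n : ℕ) (G : ℝ → ℝ) (Ω : Set (Euc n)) (u : Euc n → ℝ) : ℝ≥0∞ :=
  ∫⁻ x in Ω, ENNReal.ofReal (G |u x|)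

/-- The Gagliardo modular `Φ_{s,G}(u) = ∬ G(|D_s u(x,y)|) dx dy/|x-y|ⁿ`
(as an extended real). -/
def modsG (n : ℕ) (s : ℝ) (G : ℝ → ℝ) (u : Euc n → ℝ) : ℝ≥0∞ :=
  ∫⁻ p : Euc n × Euc n, ENNReal.ofReal (G |Ds n s u p.1 p.2| / ‖p.1 - p.2‖ ^ (n : ℝ))

/-- Membership in `W^{s,G}_0(Ω)`: measurable, finite modulars, vanishing a.e. outside `Ω`. -/
def MemW0 (n : ℕ) (s : ℝ) (G : ℝ → ℝ) (Ω : Set (Euc n)) (u : Euc n → ℝ) : Prop :=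
  Measurable u ∧ modG n G Ω u + modsG n s G u < ⊤ ∧
    ∀ᵐ x : Euc n ∂volume, x ∉ Ω → u x = 0

/-- `u` is a weak solution of `(-Δ_g)^s u = rhs(u)` in `Ω`, `u = 0` in `ℝⁿ ∖ Ω`:
for every `v ∈ W^{s,G}_0(Ω)` the defining double integral converges absolutely and equals
`∫_Ω rhs(u) v dx`. -/
def IsWeakSol (n : ℕ) (s : ℝ) (Y : YoungPair) (Ω : Set (Euc n)) (rhs : ℝ → ℝ)
    (u : Euc n → ℝ) : Prop :=
  MemW0 n s Y.G Ω u ∧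
  ∀ v : Euc n → ℝ, MemW0 n s Y.G Ω v →
    MeasureTheory.Integrable (fun p : Euc n × Euc n =>
      Y.g (Ds n s u p.1 p.2) * (v p.1 - v p.2) / ‖p.1 - p.2‖ ^ ((n : ℝ) + s)) ∧
    (∫ p : Euc n × Euc n,
        Y.g (Ds n s u p.1 p.2) * (v p.1 - v p.2) / ‖p.1 - p.2‖ ^ ((n : ℝ) + s)) =
      ∫ x in Ω, rhs (u x) * v x

/-- The Luxemburg norm `‖u‖_{L^Ψ(Ω)}` (with value `∞` when no admissible `λ` exists). -/
def luxNorm (n : ℕ) (Ψ : ℝ → ℝ) (Ω : Set (Euc n)) (u : Euc n → ℝ) : ℝ≥0∞ :=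
  sInf {lam : ℝ≥0∞ | 0 < lam ∧ lam ≠ ⊤ ∧
    (∫⁻ x in Ω, ENNReal.ofReal (Ψ (|u x| / lam.toReal))) ≤ 1}

/-- The Gagliardo seminorm `[u]_{s,G}` (with value `∞` when no admissible `λ` exists). -/
def gagSemi (n : ℕ) (s : ℝ) (G : ℝ → ℝ) (u : Euc n → ℝ) : ℝ≥0∞ :=
  sInf {lam : ℝ≥0∞ | 0 < lam ∧ lam ≠ ⊤ ∧
    modsG n s G (fun x => u x / lam.toReal) ≤ 1}

theorem monotoneOn_of_hasDerivWithinAt_Ici_nonneg {f f' : ℝ → ℝ} {s : Set ℝ}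
    (hs : s.OrdConnected) (hf : ContinuousOn f s)
    (hf' : ∀ x ∈ s, HasDerivWithinAt f (f' x) (Ici x) x) (hpos : ∀ x ∈ s, 0 ≤ f' x) :
    MonotoneOn f s := by
  intro a ha b hb hab
  have hsub : Icc a b ⊆ s := hs.out ha hb
  exact image_le_of_deriv_right_le_deriv_boundary (f := fun _ => f a) (f' := 0)
    continuousOn_const (fun x _ => hasDerivWithinAt_const x _ _) le_rfl (hf.mono hsub)
    (fun x hx => hf' x (hsub (Ico_subset_Icc_self hx)))
    (fun x hx => hpos x (hsub (Ico_subset_Icc_self hx))) ⟨hab, le_rfl⟩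

theorem antitoneOn_of_hasDerivWithinAt_Ici_nonpos {f f' : ℝ → ℝ} {s : Set ℝ}
    (hs : s.OrdConnected) (hf : ContinuousOn f s)
    (hf' : ∀ x ∈ s, HasDerivWithinAt f (f' x) (Ici x) x) (hneg : ∀ x ∈ s, f' x ≤ 0) :
    AntitoneOn f s := by
  have := monotoneOn_of_hasDerivWithinAt_Ici_nonneg hs hf.neg (fun x hx => (hf' x hx).neg)
    (fun x hx => neg_nonneg.mpr (hneg x hx))
  exact fun a ha b hb hab => neg_le_neg_iff.mp (this ha hb hab)

theorem monotoneOn_integral_mul_rpow {φ : ℝ → ℝ} (hφ : MonotoneOn φ (Ici 0))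
    (hφ_nonneg : ∀ τ, 0 ≤ τ → 0 ≤ φ τ) (e : ℝ) :
    MonotoneOn (fun r => ∫ τ in (0 : ℝ)..r, φ τ * τ ^ e) (Ici 0) := by
  have hloc : ∀ a b : ℝ, 0 < a → 0 < b →
      IntervalIntegrable (fun τ => φ τ * τ ^ e) volume a b := fun a b ha hb => by
      have hpos : ∀ τ ∈ uIcc a b, 0 < τ := fun τ hτ => (lt_min ha hb).trans_le hτ.1
      exact (hφ.mono fun τ hτ => le_of_lt (hpos τ hτ)).intervalIntegrable.mul_continuousOn
        fun τ hτ => (Real.continuousAt_rpow_const τ e (Or.inl (hpos τ hτ).ne')).continuousWithinAt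
  intro x hx y hy hxy
  rw [mem_Ici] at hx hy
  dsimp only
  by_cases h0y : IntervalIntegrable (fun τ => φ τ * τ ^ e) volume 0 y
  · have h0x := h0y.mono_set <| by
      rw [uIcc_of_le hx, uIcc_of_le hy]; exact Icc_subset_Icc_right hxy
    have hxy' := h0y.mono_set <| by
      rw [uIcc_of_le hxy, uIcc_of_le hy]; exact Icc_subset_Icc_left hx
    rw [← intervalIntegral.integral_add_adjacent_intervals h0x hxy', le_add_iff_nonneg_right]
    exact intervalIntegral.integral_nonneg hxy fun τ hτ =>
      mul_nonneg (hφ_nonneg τ (hx.trans hτ.1)) (Real.rpow_nonneg (hx.trans hτ.1) e)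
  -- Off integrability the primitive is the junk value `0`; since the integrand is integrable away
  -- from `0`, this happens at `y` only if it happens at every `x > 0`.
  · rw [intervalIntegral.integral_undef h0y]
    rcases hx.eq_or_lt with rfl | hx0
    · rw [intervalIntegral.integral_same]
    · exact (intervalIntegral.integral_undef fun h0x =>
        h0y (h0x.trans (hloc x y hx0 (hx0.trans_le hxy)))).le

theorem luxNorm_le_map_luxNorm {n : ℕ} {Φ Ψ : ℝ → ℝ} {Ω : Set (Euc n)} {u v : Euc n → ℝ}
    {f : ℝ≥0∞ → ℝ≥0∞} (hf : Monotone f) (hf_cont : Continuous f) (hf_top : f ⊤ = ⊤)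
    (h : ∀ lam : ℝ≥0∞, 0 < lam → lam ≠ ⊤ →
      ∫⁻ x in Ω, ENNReal.ofReal (Ψ (|u x| / lam.toReal)) ≤ 1 → luxNorm n Φ Ω v ≤ f lam) :
    luxNorm n Φ Ω v ≤ f (luxNorm n Ψ Ω u) := by
  conv_rhs => rw [luxNorm, hf.map_sInf_of_continuousAt hf_cont.continuousAt hf_top]
  exact le_sInf fun _ ⟨lam, ⟨hl0, hltop, hint⟩, hlam⟩ => hlam ▸ h lam hl0 hltop hint

namespace YoungPair

variable (Y : YoungPair)

theorem monotone_g : Monotone Y.g := by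
  refine MonotoneOn.Iic_union_Ici (a := 0) (fun a ha b hb hab => ?_) Y.g_mono
  have h := Y.g_mono (mem_Ici.mpr (neg_nonneg.mpr hb)) (mem_Ici.mpr (neg_nonneg.mpr ha))
    (neg_le_neg hab)
  rw [Y.g_odd, Y.g_odd] at h
  exact neg_le_neg_iff.mp h

theorem g_nonneg {t : ℝ} (ht : 0 ≤ t) : 0 ≤ Y.g t :=
  Y.g_zero ▸ Y.monotone_g ht

theorem G_zero : Y.G 0 = 0 := by
  rw [Y.G_eq 0 le_rfl, intervalIntegral.integral_same]

theorem monotoneOn_G : MonotoneOn Y.G (Ici 0) := by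
  intro a ha b hb hab
  rw [Y.G_eq a ha, Y.G_eq b hb,
    ← intervalIntegral.integral_add_adjacent_intervals (a := 0) (b := a) (c := b)
      Y.monotone_g.intervalIntegrable Y.monotone_g.intervalIntegrable, le_add_iff_nonneg_right]
  exact intervalIntegral.integral_nonneg hab fun τ hτ => Y.g_nonneg ((mem_Ici.mp ha).trans hτ.1)

theorem G_nonneg {t : ℝ} (ht : 0 ≤ t) : 0 ≤ Y.G t :=
  Y.G_zero ▸ Y.monotoneOn_G self_mem_Ici ht ht

theorem continuousOn_G : ContinuousOn Y.G (Ici 0) :=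
  (intervalIntegral.continuous_primitive (fun _ _ => Y.monotone_g.intervalIntegrable)
    0).continuousOn.congr fun x hx => Y.G_eq x hx

theorem hasDerivWithinAt_G {x : ℝ} (hx : 0 ≤ x) :
    HasDerivWithinAt Y.G (Y.g x) (Ici x) x :=
  (intervalIntegral.integral_hasDerivWithinAt_right Y.monotone_g.intervalIntegrable
      Y.monotone_g.measurable.stronglyMeasurable.stronglyMeasurableAtFilter
      ((Y.g_rightCont x hx).mono Ioi_subset_Ici_self)).congr
    (fun y hy => Y.G_eq y (hx.trans hy)) (Y.G_eq x hx)

theorem hasDerivWithinAt_G_mul_rpow_neg {x : ℝ} (hx : 0 < x) (p : ℝ) :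
    HasDerivWithinAt (fun t => Y.G t * t ^ (-p))
      (x ^ (-p - 1) * (x * Y.g x - p * Y.G x)) (Ici x) x := by
  refine ((Y.hasDerivWithinAt_G hx.le).mul
    (Real.hasDerivAt_rpow_const (p := -p) (Or.inl hx.ne')).hasDerivWithinAt).congr_deriv ?_
  rw [Real.rpow_sub_one hx.ne']
  field_simp
  ring

theorem continuousOn_G_mul_rpow_neg (p : ℝ) :
    ContinuousOn (fun t => Y.G t * t ^ (-p)) (Ioi 0) :=
  (Y.continuousOn_G.mono Ioi_subset_Ici_self).mul
    fun x hx => (Real.continuousAt_rpow_const x (-p) (Or.inl (ne_of_gt hx))).continuousWithinAt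

theorem antitoneOn_G_mul_rpow_neg {pm pp : ℝ} (hY : Y.Cond pm pp) :
    AntitoneOn (fun t => Y.G t * t ^ (-pp)) (Ioi 0) :=
  antitoneOn_of_hasDerivWithinAt_Ici_nonpos ordConnected_Ioi (Y.continuousOn_G_mul_rpow_neg pp)
    (fun _ hx => Y.hasDerivWithinAt_G_mul_rpow_neg hx pp) fun x hx =>
      mul_nonpos_of_nonneg_of_nonpos (Real.rpow_nonneg (le_of_lt hx) _)
        (sub_nonpos.mpr (hY x hx).2)

theorem monotoneOn_G_mul_rpow_neg {pm pp : ℝ} (hY : Y.Cond pm pp) :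
    MonotoneOn (fun t => Y.G t * t ^ (-pm)) (Ioi 0) :=
  monotoneOn_of_hasDerivWithinAt_Ici_nonneg ordConnected_Ioi (Y.continuousOn_G_mul_rpow_neg pm)
    (fun _ hx => Y.hasDerivWithinAt_G_mul_rpow_neg hx pm) fun x hx =>
      mul_nonneg (Real.rpow_nonneg (le_of_lt hx) _) (sub_nonneg.mpr (hY x hx).1)

theorem G_mul_le_max_rpow_mul {pm pp : ℝ} (hY : Y.Cond pm pp) {l t : ℝ} (hl : 0 < l)
    (ht : 0 ≤ t) : Y.G (l * t) ≤ max (l ^ pp) (l ^ pm) * Y.G t := by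
  rcases ht.eq_or_lt with rfl | ht
  · simp [G_zero]
  have rescale : ∀ p : ℝ, Y.G (l * t) * (l * t) ^ (-p) ≤ Y.G t * t ^ (-p) →
      Y.G (l * t) ≤ l ^ p * Y.G t := fun p h => by
    rw [Real.mul_rpow hl.le ht.le, ← mul_assoc, mul_le_mul_iff_left₀ (by positivity),
      Real.rpow_neg hl.le, ← div_eq_mul_inv, div_le_iff₀ (by positivity)] at h
    simpa only [mul_comm] using h
  have hGt := Y.G_nonneg ht.le
  rcases le_total 1 l with h1 | h1
  · refine (rescale pp ?_).trans (mul_le_mul_of_nonneg_right (le_max_left _ _) hGt)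
    exact Y.antitoneOn_G_mul_rpow_neg hY ht (mul_pos hl ht) (le_mul_of_one_le_left ht.le h1)
  · refine (rescale pm ?_).trans (mul_le_mul_of_nonneg_right (le_max_right _ _) hGt)
    exact Y.monotoneOn_G_mul_rpow_neg hY (mul_pos hl ht) ht (mul_le_of_le_one_left ht.le h1)

theorem inv_G_div_max_rpow_le {pm pp : ℝ} (hY : Y.Cond pm pp) {Ginv : ℝ → ℝ}
    (hGinv_mono : MonotoneOn Ginv (Ici 0)) (hGinv_G : ∀ t : ℝ, 0 ≤ t → Ginv (Y.G t) = t)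
    {l t : ℝ} (hl : 0 < l) (ht : 0 ≤ t) :
    Ginv (Y.G t / max (l ^ pp) (l ^ pm)) ≤ t / l := by
  have hM : 0 < max (l ^ pp) (l ^ pm) := lt_max_of_lt_left (Real.rpow_pos_of_pos hl pp)
  have htl : 0 ≤ t / l := div_nonneg ht hl.le
  have hscale : Y.G t / max (l ^ pp) (l ^ pm) ≤ Y.G (t / l) := by
    rw [div_le_iff₀ hM, mul_comm]
    simpa only [mul_div_cancel₀ t hl.ne'] using Y.G_mul_le_max_rpow_mul hY hl htl
  calc Ginv (Y.G t / max (l ^ pp) (l ^ pm)) ≤ Ginv (Y.G (t / l)) :=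
        hGinv_mono (div_nonneg (Y.G_nonneg ht) hM.le) (Y.G_nonneg htl) hscale
    _ = t / l := hGinv_G _ htl

theorem luxNorm_comp_inv_G_le_max_rpow {pm pp : ℝ} (hY : Y.Cond pm pp) {Ginv Ψ : ℝ → ℝ}
    (hGinv_nonneg : ∀ t : ℝ, 0 ≤ t → 0 ≤ Ginv t)
    (hGinv_mono : MonotoneOn Ginv (Ici 0)) (hGinv_G : ∀ t : ℝ, 0 ≤ t → Ginv (Y.G t) = t)
    (hΨ : MonotoneOn Ψ (Ici 0)) {n : ℕ} {Ω : Set (Euc n)} {u : Euc n → ℝ} {lam : ℝ≥0∞}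
    (hl0 : 0 < lam) (hltop : lam ≠ ⊤)
    (hint : ∫⁻ x in Ω, ENNReal.ofReal (Ψ (|u x| / lam.toReal)) ≤ 1) :
    luxNorm n (fun t => Ψ (Ginv t)) Ω (fun x => Y.G |u x|) ≤ max (lam ^ pp) (lam ^ pm) := by
  have hpp_ne_top := ENNReal.rpow_ne_top_of_nonneg' (y := pp) hl0 hltop
  have hpm_ne_top := ENNReal.rpow_ne_top_of_nonneg' (y := pm) hl0 hltop
  refine sInf_le ⟨lt_max_of_lt_left (ENNReal.rpow_pos hl0 hltop),
    max_ne_top hpp_ne_top hpm_ne_top, le_trans (lintegral_mono fun x => ?_) hint⟩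
  have hl : 0 < lam.toReal := ENNReal.toReal_pos hl0.ne' hltop
  have hux : 0 ≤ |u x| := abs_nonneg _
  dsimp only
  rw [ENNReal.toReal_max hpp_ne_top hpm_ne_top, ← ENNReal.toReal_rpow, ← ENNReal.toReal_rpow,
    abs_of_nonneg (Y.G_nonneg hux)]
  exact ENNReal.ofReal_le_ofReal <| hΨ (hGinv_nonneg _ (by positivity [Y.G_nonneg hux]))
    (div_nonneg hux hl.le) (Y.inv_G_div_max_rpow_le hY hGinv_mono hGinv_G hl hux)

end YoungPair

theorem statement12_general (n : ℕ) (s : ℝ)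
    (pm pp : ℝ) (hpm : 1 < pm) (hpmpp : pm ≤ pp)
    (Y : YoungPair) (hY : Y.Cond pm pp)
    (Ginv Gstar : ℝ → ℝ)
    (hGinv : ∀ t : ℝ, 0 ≤ t → 0 ≤ Ginv t ∧ Y.G (Ginv t) = t)
    (hGinv' : ∀ t : ℝ, 0 ≤ t → Ginv (Y.G t) = t)
    (hGstar' : ∀ t : ℝ, 0 ≤ t → 0 ≤ Gstar t ∧
      (∫ τ in (0 : ℝ)..(Gstar t), Ginv τ * τ ^ (-((n : ℝ) + s) / n)) = t)
    (Ω : Set (Euc n))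
    (u : Euc n → ℝ) :
    luxNorm n (fun t => Gstar (Ginv t)) Ω (fun x => Y.G |u x|) ≤
      max (luxNorm n Gstar Ω u ^ pp) (luxNorm n Gstar Ω u ^ pm) := by
  have hpm0 : 0 < pm := one_pos.trans hpm
  have hpp0 : 0 < pp := hpm0.trans_le hpmpp
  have hGinv_mono : MonotoneOn Ginv (Ici 0) := Function.monotoneOn_of_rightInvOn_of_mapsTo
    Y.monotoneOn_G (fun t ht => (hGinv t ht).2) fun t ht => (hGinv t ht).1
  have hGstar_mono : MonotoneOn Gstar (Ici 0) := Function.monotoneOn_of_rightInvOn_of_mapsTo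
    (monotoneOn_integral_mul_rpow hGinv_mono (fun t ht => (hGinv t ht).1) _)
    (fun t ht => (hGstar' t ht).2) fun t ht => (hGstar' t ht).1
  exact luxNorm_le_map_luxNorm (f := fun c => max (c ^ pp) (c ^ pm))
    (fun a b hab => max_le_max (ENNReal.rpow_le_rpow hab hpp0.le)
      (ENNReal.rpow_le_rpow hab hpm0.le))
    (ENNReal.continuous_rpow_const.max ENNReal.continuous_rpow_const)
    (by simp [ENNReal.top_rpow_of_pos hpp0]) fun _ hl0 hltop hint =>
      Y.luxNorm_comp_inv_G_le_max_rpow hY (fun t ht => (hGinv t ht).1) hGinv_mono hGinv'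
        hGstar_mono hl0 hltop hint

/-- `‖G(|u|)‖_{L^H(Ω)} ≤ max{‖u‖_{L^{G*}(Ω)}^{p⁺}, ‖u‖_{L^{G*}(Ω)}^{p⁻}}`
where `H = G* ∘ G⁻¹`. -/
theorem statement12 (n : ℕ) (hn : 1 ≤ n) (s : ℝ) (hs : s ∈ Set.Ioo (0 : ℝ) 1)
    (pm pp : ℝ) (hpm : 1 < pm) (hpmpp : pm ≤ pp) (hspp : s * pp < n)
    (Y : YoungPair) (hY : Y.Cond pm pp)
    (Ginv Gstar : ℝ → ℝ)
    (hGinv : ∀ t : ℝ, 0 ≤ t → 0 ≤ Ginv t ∧ Y.G (Ginv t) = t)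
    (hGinv' : ∀ t : ℝ, 0 ≤ t → Ginv (Y.G t) = t)
    (hGstar : ∀ r : ℝ, 0 ≤ r →
      Gstar (∫ τ in (0 : ℝ)..r, Ginv τ * τ ^ (-((n : ℝ) + s) / n)) = r)
    (hGstar' : ∀ t : ℝ, 0 ≤ t → 0 ≤ Gstar t ∧
      (∫ τ in (0 : ℝ)..(Gstar t), Ginv τ * τ ^ (-((n : ℝ) + s) / n)) = t)
    (Ω : Set (Euc n)) (hΩo : IsOpen Ω)
    (u : Euc n → ℝ) (hu : Measurable u) (hfin : luxNorm n Gstar Ω u < ⊤) :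
    luxNorm n (fun t => Gstar (Ginv t)) Ω (fun x => Y.G |u x|) ≤
      max (luxNorm n Gstar Ω u ^ pp) (luxNorm n Gstar Ω u ^ pm) :=
  statement12_general n s pm pp hpm hpmpp Y hY Ginv Gstar hGinv hGinv' hGstar' Ω u
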